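/- Let G = (V,E) be a finite undirected simple graph, h a positive integer, v ∈ V, u ∈ N_v^h(G) with s = dis_G(u,v), and w ∈ N_v^{h-s}(G) with w ≠ u. Suppose dis_{G(V \ {v})}(u,w) ≤ h. Then every shortest path between u and w in G(V \ {v}) is contained in the subgraph induced by N_v^h(G): for every shortest path P from u to w in G(V \ {v}) and every vertex w_i on P, one has w_i ∈ N_v^h(G) (equivalently, dis_G(v, w_i) ≤ h). -/

import Mathlib

open SimpleGraph

variable {V : Type*} [Fintype V] [DecidableEq V]

/-- The subgraph of `G` induced by the vertex set `S`, viewed as a graph on the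
same vertex type (edges are exactly the edges of `G` with both endpoints in `S`). -/
def SimpleGraph.inducedOn (G : SimpleGraph V) (S : Set V) : SimpleGraph V where
  Adj x y := G.Adj x y ∧ x ∈ S ∧ y ∈ S
  symm := ⟨fun _ _ ⟨ha, hx, hy⟩ => ⟨ha.symm, hy, hx⟩⟩
  loopless := ⟨fun x ⟨ha, _, _⟩ => G.ne_of_adj ha rfl⟩

/-- The `h`-hop neighborhood of `v` in `G`:
all vertices `u ≠ v` with `dis_G(v,u) ≤ h`. -/
def SimpleGraph.hNbhd (G : SimpleGraph V) (h : ℕ) (v : V) : Set V :=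
  {u | u ≠ v ∧ G.edist v u ≤ (h : ℕ∞)}

/-- The `h`-degree of `v` in `G`: the number of vertices in its `h`-hop neighborhood. -/
noncomputable def SimpleGraph.hDeg (G : SimpleGraph V) (h : ℕ) (v : V) : ℕ :=
  (G.hNbhd h v).ncard

/-!
A vertex `x` on a `u`–`w` walk `p` satisfies `d(v,x) ≤ d(v,u) + |p[u,x]|` and
`d(v,x) ≤ d(v,w) + |p[x,w]|`. Adding the two bounds removes the dependence on where `x` sits:
`2 d(v,x) ≤ s + (h - s) + |p| ≤ 2h`.
-/

namespace SimpleGraph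

variable {α : Type*} {G : SimpleGraph α}

lemma inducedOn_le (S : Set α) : G.inducedOn S ≤ G := fun _ _ hab => hab.1

lemma Walk.mem_of_mem_support_inducedOn {S : Set α} {a b x : α} (p : (G.inducedOn S).Walk a b)
    (ha : a ∈ S) (hx : x ∈ p.support) : x ∈ S := by
  induction p with
  | nil => simp_all
  | cons hadj q ih =>
    rcases List.mem_cons.mp (Walk.support_cons _ _ ▸ hx) with rfl | hx
    · exact ha
    · exact ih hadj.2.2 hx

lemma Walk.edist_add_edist_le_of_mem_support [DecidableEq α] {u w x : α} (v : α)
    (p : G.Walk u w) (hx : x ∈ p.support) :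
    G.edist v x + G.edist v x ≤ G.edist v u + G.edist v w + p.length := by
  have hsplit : (p.takeUntil x hx).length + (p.dropUntil x hx).length = p.length := by
    rw [← Walk.length_append, p.take_spec hx]
  have hux : G.edist v x ≤ G.edist v u + (p.takeUntil x hx).length :=
    G.edist_triangle.trans <| by gcongr; exact (p.takeUntil x hx).edist_le
  have hwx : G.edist v x ≤ G.edist v w + (p.dropUntil x hx).length :=
    G.edist_triangle.trans <| by gcongr; exact edist_comm (G := G) ▸ (p.dropUntil x hx).edist_le
  calc G.edist v x + G.edist v x
      ≤ (G.edist v u + (p.takeUntil x hx).length) + (G.edist v w + (p.dropUntil x hx).length) :=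
        add_le_add hux hwx
    _ = G.edist v u + G.edist v w + p.length := by
        rw [add_add_add_comm, ← hsplit, Nat.cast_add]

end SimpleGraph

theorem stmt5_general (G : SimpleGraph V) (h : ℕ) (v u w : V) (s : ℕ)
    (hu : u ∈ G.hNbhd h v) (hs : G.edist u v = (s : ℕ∞))
    (hw : w ∈ G.hNbhd (h - s) v)
    (hle : (G.inducedOn {v}ᶜ).edist u w ≤ (h : ℕ∞)) :
    ∀ p : (G.inducedOn {v}ᶜ).Walk u w, p.IsPath →
      (p.length : ℕ∞) = (G.inducedOn {v}ᶜ).edist u w →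
      ∀ x ∈ p.support, x ∈ G.hNbhd h v := by
  intro p _ hlen x hx
  obtain ⟨huv, hvu⟩ := hu
  have hvs : G.edist v u = s := edist_comm.trans hs
  have hsh : s ≤ h := by exact_mod_cast hvs ▸ hvu
  have hph : p.length ≤ h := by exact_mod_cast hlen ▸ hle
  refine ⟨p.mem_of_mem_support_inducedOn huv hx, ?_⟩
  have hsum := (p.mapLe (inducedOn_le _)).edist_add_edist_le_of_mem_support v
    (by rwa [Walk.support_mapLe_eq_support])
  rw [Walk.length_mapLe, hvs] at hsum
  have hvw : G.edist v w ≤ (h - s : ℕ) := hw.2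
  lift G.edist v w to ℕ using ne_top_of_le_ne_top (ENat.natCast_ne_top _) hvw with e
  norm_cast at hvw
  have hdd : G.edist v x + G.edist v x ≤ ((h + h : ℕ) : ℕ∞) :=
    hsum.trans (by norm_cast; omega)
  lift G.edist v x to ℕ using ne_top_of_le_ne_top (ENat.natCast_ne_top _) (le_self_add.trans hdd)
    with d
  norm_cast at hdd ⊢
  omega

/-- Theorem 1: all shortest paths between `u ∈ N_v^h(G)` and `w ∈ N_v^{h-s}(G)` in
`G(V∖{v})` of length at most `h` are contained in the subgraph induced by `N_v^h(G)`. -/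
theorem stmt5 (G : SimpleGraph V) (h : ℕ) (hpos : 0 < h) (v u w : V) (s : ℕ)
    (hu : u ∈ G.hNbhd h v) (hs : G.edist u v = (s : ℕ∞))
    (hw : w ∈ G.hNbhd (h - s) v) (hwu : w ≠ u)
    (hle : (G.inducedOn {v}ᶜ).edist u w ≤ (h : ℕ∞)) :
    ∀ p : (G.inducedOn {v}ᶜ).Walk u w, p.IsPath →
      (p.length : ℕ∞) = (G.inducedOn {v}ᶜ).edist u w →
      ∀ x ∈ p.support, x ∈ G.hNbhd h v :=
  stmt5_general G h v u w s hu hs hw hle
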